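/- Let X be a nonempty metric space that is locally compact, isometrically homogeneous, and admits a dilation of factor λ > 1. Then X is a proper metric space, i.e., every closed ball in X is compact. -/

import Mathlib

/-!
Local compactness gives one compact closed ball `closedBall p r` with `r > 0`. Surjective
isometries carry closed balls onto closed balls of the same radius, so homogeneity makes every
closed ball of radius `r` compact; the dilation carries closed balls onto closed balls of `λ` times
the radius, so by induction every closed ball of radius `λ ^ n * r` is compact. These radii tend
to infinity, hence every closed ball is compact.
-/

/-- `X` is isometrically homogeneous: for all `p q` there is a surjective
isometry sending `p` to `q`. -/
def IsometricallyHomogeneous (X : Type*) [MetricSpace X] : Prop :=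
  ∀ p q : X, ∃ f : X → X, Isometry f ∧ Function.Surjective f ∧ f p = q

/-- `f` is a dilation of factor `λ` on `X`: a homeomorphism multiplying all
distances by `λ`. -/
def IsDilation {X : Type*} [MetricSpace X] (f : X ≃ₜ X) (lam : ℝ) : Prop :=
  ∀ p q : X, dist (f p) (f q) = lam * dist p q

open Metric Filter

theorem Isometry.image_closedBall_of_surjective {X Y : Type*} [PseudoMetricSpace X]
    [PseudoMetricSpace Y] {g : X → Y} (hg : Isometry g) (hsurj : Function.Surjective g)
    (p : X) (s : ℝ) : g '' closedBall p s = closedBall (g p) s := by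
  rw [← hg.preimage_closedBall, Set.image_preimage_eq _ hsurj]

section

variable {X : Type*} [MetricSpace X]

theorem IsometricallyHomogeneous.isCompact_closedBall (hhom : IsometricallyHomogeneous X)
    {p : X} {s : ℝ} (hp : IsCompact (closedBall p s)) (q : X) :
    IsCompact (closedBall q s) := by
  obtain ⟨g, hg, hsurj, rfl⟩ := hhom p q
  rw [← hg.image_closedBall_of_surjective hsurj]
  exact hp.image hg.continuous

theorem IsDilation.preimage_closedBall {f : X ≃ₜ X} {lam : ℝ} (hf : IsDilation f lam)
    (hlam : 0 < lam) (p : X) (s : ℝ) :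
    f ⁻¹' closedBall (f p) (lam * s) = closedBall p s := by
  ext x
  rw [Set.mem_preimage, mem_closedBall, mem_closedBall, hf, mul_le_mul_iff_right₀ hlam]

theorem IsDilation.isCompact_closedBall_mul {f : X ≃ₜ X} {lam : ℝ} (hf : IsDilation f lam)
    (hlam : 0 < lam) {p : X} {s : ℝ} (hp : IsCompact (closedBall p s)) :
    IsCompact (closedBall (f p) (lam * s)) := by
  rwa [← f.isCompact_preimage, hf.preimage_closedBall hlam]

theorem IsometricallyHomogeneous.isCompact_closedBall_pow_mul
    (hhom : IsometricallyHomogeneous X) {f : X ≃ₜ X} {lam : ℝ} (hf : IsDilation f lam)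
    (hlam : 0 < lam) {p : X} {r : ℝ} (hr : IsCompact (closedBall p r)) (n : ℕ) (q : X) :
    IsCompact (closedBall q (lam ^ n * r)) := by
  induction n generalizing q with
  | zero => simpa using hhom.isCompact_closedBall hr q
  | succ n ih =>
    have hfp := hf.isCompact_closedBall_mul hlam (ih p)
    rw [← mul_assoc, ← pow_succ'] at hfp
    exact hhom.isCompact_closedBall hfp q

end

theorem properSpace_of_locallyCompact_homogeneous_selfSimilar
    (X : Type*) [MetricSpace X] [Nonempty X] [LocallyCompactSpace X]
    (hhom : IsometricallyHomogeneous X)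
    (lam : ℝ) (hlam : 1 < lam) (f : X ≃ₜ X) (hf : IsDilation f lam) :
    ProperSpace X := by
  obtain ⟨p⟩ := ‹Nonempty X›
  obtain ⟨r, hr, hball⟩ := exists_isCompact_closedBall p
  have hradii : Tendsto (fun n : ℕ ↦ lam ^ n * r) atTop atTop :=
    (tendsto_pow_atTop_atTop_of_one_lt hlam).atTop_mul_const hr
  exact ProperSpace.of_seq_closedBall hradii <| .of_forall fun n ↦
    hhom.isCompact_closedBall_pow_mul hf (zero_lt_one.trans hlam) hball n p
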